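/- Let p ≥ 1, 0 ≤ k < 1, and let h : 𝔻 → ℂ be analytic with h(0) = 0. Suppose g : 𝔻 → ℂ is analytic with g(0) = 0 and |g'(z)| ≤ k|h'(z)| for all z ∈ 𝔻. Then for 0 < r < 1, M_p(r, h + conj(g)) ≤ (1 + k) ∫₀^r M_p(s, h') ds, where M_p(r,F) = ((1/2π)∫₀^{2π}|F(re^{iθ})|^p dθ)^{1/p}. -/

import Mathlib

open Complex Real Metric MeasureTheory

/-- The `p`-th integral mean of `F` on the circle of radius `r`. -/
noncomputable def Mp (p r : ℝ) (F : ℂ → ℂ) : ℝ :=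
  ((1 / (2 * π)) * ∫ θ in (0 : ℝ)..(2 * π), ‖F (r * Complex.exp (θ * Complex.I))‖ ^ p) ^ (1 / p)

open Set Function ComplexConjugate

/-!
Writing `h` and `g` along the ray `s ↦ s e^{iθ}` as integrals of their derivatives, the
quasiconformality bound gives `|f(re^{iθ})| ≤ (1 + k) ∫₀^r |h'(se^{iθ})| ds` pointwise. Taking
`L^p` norms in `θ`, Minkowski's integral inequality moves the norm inside the `s`-integral; it is
`‖∫ u‖ ≤ ∫ ‖u‖` for the curve `s ↦ |h'(s e^{i·})|` in `L^p` of the circle `ℝ / 2πℤ`.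
-/

instance fact_two_pi_pos : Fact (0 < 2 * π) := ⟨two_pi_pos⟩

theorem AddCircle.coe_toCircle_two_pi_coe (θ : ℝ) :
    (AddCircle.toCircle (θ : AddCircle (2 * π)) : ℂ) = exp (θ * I) := by
  rw [AddCircle.toCircle_apply_mk, Circle.coe_exp, div_self two_pi_pos.ne', one_mul]

theorem Mp_eq_mul_rpow_integral_addCircle (p r : ℝ) (F : ℂ → ℂ) :
    Mp p r F = (1 / (2 * π)) ^ (1 / p) *
      (∫ x : AddCircle (2 * π), ‖F (r * AddCircle.toCircle x)‖ ^ p) ^ (1 / p) := by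
  have := AddCircle.intervalIntegral_preimage (2 * π) 0
    (fun x : AddCircle (2 * π) => ‖F (r * AddCircle.toCircle x)‖ ^ p)
  simp only [zero_add, AddCircle.coe_toCircle_two_pi_coe] at this
  rw [Mp, this, mul_rpow (by positivity) (integral_nonneg fun _ => by positivity)]

theorem rpow_integral_norm_rpow_le_mul {X E F : Type*} [MeasurableSpace X] {μ : Measure X}
    [NormedAddCommGroup E] [NormedAddCommGroup F] {p c : ℝ} (hp : 0 < p) (hc : 0 ≤ c)
    {f : X → E} {g : X → F} (hg : Integrable (fun x => ‖g x‖ ^ p) μ)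
    (hfg : ∀ x, ‖f x‖ ≤ c * ‖g x‖) :
    (∫ x, ‖f x‖ ^ p ∂μ) ^ (1 / p) ≤ c * (∫ x, ‖g x‖ ^ p ∂μ) ^ (1 / p) := by
  have hpow : ∀ x, ‖f x‖ ^ p ≤ c ^ p * ‖g x‖ ^ p := fun x => by
    rw [← mul_rpow hc (norm_nonneg _)]
    exact rpow_le_rpow (norm_nonneg _) (hfg x) hp.le
  calc (∫ x, ‖f x‖ ^ p ∂μ) ^ (1 / p)
      ≤ (∫ x, c ^ p * ‖g x‖ ^ p ∂μ) ^ (1 / p) :=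
        rpow_le_rpow (integral_nonneg fun _ => by positivity)
          (integral_mono_of_nonneg (.of_forall fun _ => by positivity) (hg.const_mul _)
            (.of_forall hpow)) (by positivity)
    _ = c * (∫ x, ‖g x‖ ^ p ∂μ) ^ (1 / p) := by
        rw [integral_const_mul, mul_rpow (by positivity) (integral_nonneg fun _ => by positivity),
          ← rpow_mul hc, mul_one_div_cancel hp.ne', rpow_one]

section Minkowski

variable {X E : Type*} [TopologicalSpace X]

theorem exists_continuous_curry_eq_of_continuousOn [TopologicalSpace E] {Φ : X → ℝ → E}
    {a b : ℝ} (hab : a ≤ b) (hΦ : ContinuousOn (uncurry Φ) (univ ×ˢ Icc a b)) :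
    ∃ u : ℝ → C(X, E), Continuous u ∧ ∀ s ∈ Icc a b, ∀ x, u s x = Φ x s := by
  have hψ : Continuous fun y : Icc a b × X => Φ y.2 y.1 :=
    hΦ.comp_continuous (continuous_snd.prodMk (continuous_subtype_val.comp continuous_fst))
      fun y => ⟨mem_univ _, y.1.2⟩
  refine ⟨IccExtend hab (ContinuousMap.curry ⟨_, hψ⟩), ?_, fun s hs x => ?_⟩
  · exact (ContinuousMap.curry ⟨_, hψ⟩).continuous.Icc_extend'
  · rw [IccExtend_of_mem hab _ hs]
    rfl

variable [CompactSpace X] [NormedAddCommGroup E] [NormedSpace ℝ E]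

theorem ContinuousMap.norm_toLp_ofReal [MeasurableSpace X] [BorelSpace X] {μ : Measure X}
    [IsFiniteMeasure μ] [SecondCountableTopologyEither X E] {p : ℝ}
    [hp : Fact (1 ≤ ENNReal.ofReal p)] (f : C(X, E)) :
    ‖toLp (ENNReal.ofReal p) μ ℝ f‖ = (∫ x, ‖f x‖ ^ p ∂μ) ^ (1 / p) := by
  have hp0 : 0 < p := one_pos.trans_le (ENNReal.one_le_ofReal.mp hp.out)
  have hf : MemLp f (ENNReal.ofReal p) μ :=
    MemLp.of_bound f.continuous.aestronglyMeasurable ‖f‖ (.of_forall f.norm_coe_le_norm)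
  rw [Lp.norm_def, eLpNorm_congr_ae (coeFn_toLp μ f),
    hf.eLpNorm_eq_integral_rpow_norm (by simpa using hp0) ENNReal.ofReal_ne_top,
    ENNReal.toReal_ofReal hp0.le, ENNReal.toReal_ofReal (by positivity), one_div]

variable [CompleteSpace E]

theorem ContinuousMap.intervalIntegral_apply {u : ℝ → C(X, E)} {a b : ℝ}
    (hu : IntervalIntegrable u volume a b) (x : X) :
    (∫ s in a..b, u s) x = ∫ s in a..b, u s x :=
  (ContinuousMap.evalCLM ℝ x).intervalIntegral_comp_comm hu |>.symm

theorem intervalIntegral_apply_eq_of_eqOn_Icc {u : ℝ → C(X, E)} (hu : Continuous u)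
    {Φ : X → ℝ → E} {a b : ℝ} (hab : a ≤ b) (huΦ : ∀ s ∈ Icc a b, ∀ x, u s x = Φ x s)
    (x : X) :
    (∫ s in a..b, u s) x = ∫ s in a..b, Φ x s := by
  rw [ContinuousMap.intervalIntegral_apply (hu.intervalIntegrable a b)]
  exact intervalIntegral.integral_congr fun s hs => huΦ s (uIcc_of_le hab ▸ hs) x

theorem continuous_intervalIntegral_of_continuousOn {Φ : X → ℝ → E} {a b : ℝ} (hab : a ≤ b)
    (hΦ : ContinuousOn (uncurry Φ) (univ ×ˢ Icc a b)) :
    Continuous fun x => ∫ s in a..b, Φ x s := by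
  obtain ⟨u, hu, huΦ⟩ := exists_continuous_curry_eq_of_continuousOn hab hΦ
  exact (∫ s in a..b, u s).continuous.congr (intervalIntegral_apply_eq_of_eqOn_Icc hu hab huΦ)

variable [MeasurableSpace X] [BorelSpace X] {μ : Measure X} [IsFiniteMeasure μ]
  [SecondCountableTopologyEither X E] {p : ℝ}

/-- Minkowski's integral inequality. -/
theorem rpow_integral_norm_intervalIntegral_le (hp : 1 ≤ p) {Φ : X → ℝ → E} {a b : ℝ}
    (hab : a ≤ b) (hΦ : ContinuousOn (uncurry Φ) (univ ×ˢ Icc a b)) :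
    (∫ x, ‖∫ s in a..b, Φ x s‖ ^ p ∂μ) ^ (1 / p) ≤
      ∫ s in a..b, (∫ x, ‖Φ x s‖ ^ p ∂μ) ^ (1 / p) := by
  have : Fact (1 ≤ ENNReal.ofReal p) := ⟨ENNReal.one_le_ofReal.mpr hp⟩
  obtain ⟨u, hu, huΦ⟩ := exists_continuous_curry_eq_of_continuousOn hab hΦ
  set L := ContinuousMap.toLp (E := E) (ENNReal.ofReal p) μ ℝ
  calc (∫ x, ‖∫ s in a..b, Φ x s‖ ^ p ∂μ) ^ (1 / p)
      = ‖L (∫ s in a..b, u s)‖ := by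
        simp only [L, ContinuousMap.norm_toLp_ofReal,
          intervalIntegral_apply_eq_of_eqOn_Icc hu hab huΦ]
    _ = ‖∫ s in a..b, L (u s)‖ := by
        rw [L.intervalIntegral_comp_comm (hu.intervalIntegrable a b)]
    _ ≤ ∫ s in a..b, ‖L (u s)‖ := intervalIntegral.norm_integral_le_integral_norm hab
    _ = ∫ s in a..b, (∫ x, ‖Φ x s‖ ^ p ∂μ) ^ (1 / p) :=
        intervalIntegral.integral_congr fun s hs => by
          simp only [L, ContinuousMap.norm_toLp_ofReal, huΦ s (uIcc_of_le hab ▸ hs)]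

end Minkowski

theorem ofReal_mul_mem_ball_zero {c : ℂ} (hc : ‖c‖ = 1) {s r R : ℝ} (hs : s ∈ Icc 0 r)
    (hrR : r < R) : (s : ℂ) * c ∈ ball (0 : ℂ) R := by
  rw [mem_ball_zero_iff, norm_mul, hc, mul_one, norm_real, Real.norm_of_nonneg hs.1]
  exact hs.2.trans_lt hrR

section Ray

variable {E : Type*} [NormedAddCommGroup E] [NormedSpace ℂ E] [CompleteSpace E] {f : ℂ → E}
  {R : ℝ} {c : ℂ} {r : ℝ}

theorem continuousOn_deriv_comp_ofReal_mul (hf : DifferentiableOn ℂ f (ball 0 R))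
    (hc : ‖c‖ = 1) (hrR : r < R) :
    ContinuousOn (fun s : ℝ => deriv f (s * c)) (Icc 0 r) :=
  (hf.analyticOnNhd isOpen_ball).deriv.continuousOn.comp (by fun_prop) fun s hs =>
    ofReal_mul_mem_ball_zero hc hs hrR

theorem integral_smul_deriv_comp_ofReal_mul (hf : DifferentiableOn ℂ f (ball 0 R))
    (hc : ‖c‖ = 1) (hr0 : 0 ≤ r) (hrR : r < R) :
    ∫ s in (0 : ℝ)..r, c • deriv f (s * c) = f (r * c) - f 0 := by
  have hderiv : ∀ s ∈ uIcc 0 r,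
      HasDerivAt (fun t : ℝ => f (t * c)) (c • deriv f (s * c)) s := fun s hs => by
    rw [uIcc_of_le hr0] at hs
    have hray : HasDerivAt (fun t : ℝ => (t : ℂ) * c) c s := by
      simpa using (hasDerivAt_id (s : ℂ)).comp_ofReal.mul_const c
    have hmem := isOpen_ball.mem_nhds (ofReal_mul_mem_ball_zero hc hs hrR)
    exact (hf.differentiableAt hmem).hasDerivAt.scomp s hray
  have hint : IntervalIntegrable (fun s : ℝ => c • deriv f (s * c)) volume 0 r :=
    ((continuousOn_deriv_comp_ofReal_mul hf hc hrR).const_smul c).intervalIntegrable_of_Icc hr0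
  simpa using intervalIntegral.integral_eq_sub_of_hasDerivAt hderiv hint

theorem norm_sub_le_integral_norm_deriv_comp_ofReal_mul (hf : DifferentiableOn ℂ f (ball 0 R))
    (hc : ‖c‖ = 1) (hr0 : 0 ≤ r) (hrR : r < R) :
    ‖f (r * c) - f 0‖ ≤ ∫ s in (0 : ℝ)..r, ‖deriv f (s * c)‖ := by
  rw [← integral_smul_deriv_comp_ofReal_mul hf hc hr0 hrR]
  refine (intervalIntegral.norm_integral_le_integral_norm hr0).trans_eq ?_
  simp only [norm_smul, hc, one_mul]

end Ray

theorem norm_add_conj_le_mul_integral_norm_deriv {h g : ℂ → ℂ} {R k : ℝ}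
    (hh : DifferentiableOn ℂ h (ball 0 R)) (hg : DifferentiableOn ℂ g (ball 0 R))
    (hh0 : h 0 = 0) (hg0 : g 0 = 0) (hqc : ∀ z ∈ ball (0 : ℂ) R, ‖deriv g z‖ ≤ k * ‖deriv h z‖)
    {c : ℂ} (hc : ‖c‖ = 1) {r : ℝ} (hr0 : 0 ≤ r) (hrR : r < R) :
    ‖h (r * c) + conj (g (r * c))‖ ≤ (1 + k) * ∫ s in (0 : ℝ)..r, ‖deriv h (s * c)‖ := by
  have hnorm_h := norm_sub_le_integral_norm_deriv_comp_ofReal_mul hh hc hr0 hrR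
  have hnorm_g := norm_sub_le_integral_norm_deriv_comp_ofReal_mul hg hc hr0 hrR
  rw [hh0, sub_zero] at hnorm_h
  rw [hg0, sub_zero] at hnorm_g
  have hderiv_g :
      ∫ s in (0 : ℝ)..r, ‖deriv g (s * c)‖ ≤ ∫ s in (0 : ℝ)..r, k * ‖deriv h (s * c)‖ :=
    intervalIntegral.integral_mono_on hr0
      ((continuousOn_deriv_comp_ofReal_mul hg hc hrR).norm.intervalIntegrable_of_Icc hr0)
      (((continuousOn_deriv_comp_ofReal_mul hh hc hrR).norm.intervalIntegrable_of_Icc hr0).const_mul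
        k)
      fun s hs => hqc _ (ofReal_mul_mem_ball_zero hc hs hrR)
  calc ‖h (r * c) + conj (g (r * c))‖ ≤ ‖h (r * c)‖ + ‖g (r * c)‖ := by
        simpa only [RCLike.norm_conj] using norm_add_le (h (r * c)) (conj (g (r * c)))
    _ ≤ (1 + k) * ∫ s in (0 : ℝ)..r, ‖deriv h (s * c)‖ := by
        rw [intervalIntegral.integral_const_mul] at hderiv_g
        linarith

theorem qc_integral_mean_bound_general (p k : ℝ) (hp : 1 ≤ p) (hk0 : 0 ≤ k)
    (h g : ℂ → ℂ) (hh : DifferentiableOn ℂ h (ball (0 : ℂ) 1))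
    (hg : DifferentiableOn ℂ g (ball (0 : ℂ) 1))
    (hh0 : h 0 = 0) (hg0 : g 0 = 0)
    (hqc : ∀ z ∈ ball (0 : ℂ) 1, ‖deriv g z‖ ≤ k * ‖deriv h z‖) :
    ∀ r : ℝ, 0 < r → r < 1 →
      Mp p r (fun z => h z + (starRingEnd ℂ) (g z))
        ≤ (1 + k) * ∫ s in (0 : ℝ)..r, Mp p s (deriv h) := by
  intro r hr0 hr1
  let e : AddCircle (2 * π) → ℂ := fun x => AddCircle.toCircle x
  have he : ∀ x, ‖e x‖ = 1 := fun x => Circle.norm_coe _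
  let Φ : AddCircle (2 * π) → ℝ → ℝ := fun x s => ‖deriv h (s * e x)‖
  have hΦ : ContinuousOn (uncurry Φ) (univ ×ˢ Icc 0 r) :=
    (hh.analyticOnNhd isOpen_ball).deriv.continuousOn.norm.comp (by fun_prop) fun y hy =>
      ofReal_mul_mem_ball_zero (he y.1) hy.2 hr1
  have hpt :
      ∀ x, ‖h (r * e x) + conj (g (r * e x))‖ ≤ (1 + k) * ‖∫ s in (0 : ℝ)..r, Φ x s‖ :=
    fun x => (norm_add_conj_le_mul_integral_norm_deriv hh hg hh0 hg0 hqc (he x) hr0.le hr1).trans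
      (mul_le_mul_of_nonneg_left (Real.le_norm_self _) (by linarith))
  have hint : Integrable (fun x => ‖∫ s in (0 : ℝ)..r, Φ x s‖ ^ p) :=
    ((continuous_intervalIntegral_of_continuousOn hr0.le hΦ).norm.rpow_const
      fun _ => .inr (by linarith)).integrable_of_hasCompactSupport (.of_compactSpace _)
  simp only [Mp_eq_mul_rpow_integral_addCircle]
  calc _ ≤ (1 / (2 * π)) ^ (1 / p) * ((1 + k) * ∫ s in (0 : ℝ)..r,
        (∫ x : AddCircle (2 * π), ‖Φ x s‖ ^ p) ^ (1 / p)) := by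
        gcongr
        exact (rpow_integral_norm_rpow_le_mul (by linarith) (by linarith) hint hpt).trans
          (by gcongr; exact rpow_integral_norm_intervalIntegral_le hp hr0.le hΦ)
    _ = _ := by
        simp only [Φ, norm_norm, intervalIntegral.integral_const_mul]
        ring

theorem qc_integral_mean_bound (p k : ℝ) (hp : 1 ≤ p) (hk0 : 0 ≤ k) (hk1 : k < 1)
    (h g : ℂ → ℂ) (hh : DifferentiableOn ℂ h (ball (0 : ℂ) 1))
    (hg : DifferentiableOn ℂ g (ball (0 : ℂ) 1))
    (hh0 : h 0 = 0) (hg0 : g 0 = 0)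
    (hqc : ∀ z ∈ ball (0 : ℂ) 1, ‖deriv g z‖ ≤ k * ‖deriv h z‖) :
    ∀ r : ℝ, 0 < r → r < 1 →
      Mp p r (fun z => h z + (starRingEnd ℂ) (g z))
        ≤ (1 + k) * ∫ s in (0 : ℝ)..r, Mp p s (deriv h) :=
  qc_integral_mean_bound_general p k hp hk0 h g hh hg hh0 hg0 hqc
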